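/- Let d, M be positive integers, x_1, …, x_M ∈ ℝ^d, r_1, …, r_M ∈ ℝ, ζ > 0, ε > 0. Define u*(w)_i = 1 if (r_i − ⟨x_i, w⟩)² < ε, else 0. Let w⁽⁰⁾ ∈ ℝ^d and for t ≥ 0 set u⁽ᵗ⁾ = u*(w⁽ᵗ⁾) and w⁽ᵗ⁺¹⁾ = (Σ_{i=1}^M u_i⁽ᵗ⁾ x_i x_iᵀ + ζ I)⁻¹ (Σ_{i=1}^M u_i⁽ᵗ⁾ r_i x_i). Then ‖w⁽ᵗ⁾ − w⁽ᵗ⁻¹⁾‖² → 0 as t → ∞, i.e., the sequence of consecutive differences w⁽ᵗ⁾ − w⁽ᵗ⁻¹⁾ tends to 0. -/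

import Mathlib

open scoped RealInnerProductSpace

/-!
The iteration is alternating minimization of the trimmed ridge objective
`J(u, w) = ∑ i, u i * (r i - ⟪x i, w⟫) ^ 2 + ε * ∑ i, (1 - u i) + ζ * ‖w‖ ^ 2`.
For fixed `u`, `J` is a quadratic in `w` whose matrix `A = ∑ i, u i • x i x iᵀ + ζ • 1` satisfies
`A ≥ ζ`, so `J(u, v) = J(u, w⋆) + (v - w⋆)ᵀ A (v - w⋆)` at the minimizer `w⋆ = A⁻¹ b` and the
`w`-step lowers `J` by at least `ζ * ‖w⁽ᵗ⁺¹⁾ - w⁽ᵗ⁾‖ ^ 2`. For fixed `w`, the `u`-step picks for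
each `i` the smaller of the squared residual and `ε`, so it does not raise `J`. Since `J ≥ 0`,
these decrements are summable and hence tend to `0`.
-/

open Matrix Filter Topology

theorem Matrix.IsSymm.dotProduct_mulVec_sub_eq {n R : Type*} [Fintype n] [CommRing R]
    {A : Matrix n n R} (hA : A.IsSymm) {w b : n → R} (hw : A *ᵥ w = b) (v : n → R) :
    v ⬝ᵥ A *ᵥ v - 2 * (b ⬝ᵥ v) =
      w ⬝ᵥ A *ᵥ w - 2 * (b ⬝ᵥ w) + (v - w) ⬝ᵥ A *ᵥ (v - w) := by
  have hsymm : w ⬝ᵥ A *ᵥ v = b ⬝ᵥ v := by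
    rw [dotProduct_mulVec, ← mulVec_transpose, hA.eq, hw]
  simp only [mulVec_sub, dotProduct_sub, sub_dotProduct, hsymm, hw, dotProduct_comm v b,
    dotProduct_comm w b]
  ring

theorem ite_lt_mul_add_le {s ε a : ℝ} (ha₀ : 0 ≤ a) (ha₁ : a ≤ 1) :
    (if s < ε then 1 else 0) * s + ε * (1 - if s < ε then 1 else 0) ≤ a * s + ε * (1 - a) := by
  split_ifs with h <;> nlinarith

theorem tendsto_zero_of_add_le_of_bddBelow {F a : ℕ → ℝ} (ha : ∀ t, 0 ≤ a t)
    (hF : BddBelow (Set.range F)) (hdesc : ∀ t, F (t + 1) + a t ≤ F t) :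
    Tendsto a atTop (𝓝 0) := by
  obtain ⟨B, hB⟩ := hF
  refine (summable_of_sum_range_le (c := F 0 - B) ha fun N => ?_).tendsto_atTop_zero
  calc ∑ t ∈ Finset.range N, a t ≤ ∑ t ∈ Finset.range N, (F t - F (t + 1)) :=
        Finset.sum_le_sum fun t _ => by linarith [hdesc t]
    _ = F 0 - F N := Finset.sum_range_sub' F N
    _ ≤ F 0 - B := by linarith [hB ⟨N, rfl⟩]

section RidgeRegression

variable {ι n : Type*} [Fintype ι] (x : ι → n → ℝ) (r u : ι → ℝ) (ζ ε : ℝ)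

noncomputable def ridgeMatrix [DecidableEq n] : Matrix n n ℝ :=
  ∑ i, u i • vecMulVec (x i) (x i) + ζ • 1

theorem ridgeMatrix_isSymm [DecidableEq n] : (ridgeMatrix x u ζ).IsSymm :=
  IsSymm.ext fun i j => by
    simp [ridgeMatrix, Matrix.sum_apply, vecMulVec_apply, one_apply, mul_comm, eq_comm]

variable [Fintype n]

def ridgeLoss (v : n → ℝ) : ℝ := ∑ i, u i * (r i - x i ⬝ᵥ v) ^ 2 + ζ * (v ⬝ᵥ v)

def trimmedLoss (v : n → ℝ) : ℝ := ridgeLoss x r u ζ v + ε * ∑ i, (1 - u i)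

variable {u ζ ε}

theorem trimmedLoss_nonneg (hu₀ : 0 ≤ u) (hu₁ : u ≤ 1) (hζ : 0 ≤ ζ) (hε : 0 ≤ ε) (v : n → ℝ) :
    0 ≤ trimmedLoss x r u ζ ε v := by
  have hvv : 0 ≤ v ⬝ᵥ v := by simpa using dotProduct_self_star_nonneg v
  have hfit : 0 ≤ ∑ i, u i * (r i - x i ⬝ᵥ v) ^ 2 :=
    Finset.sum_nonneg fun i _ => mul_nonneg (hu₀ i) (sq_nonneg _)
  have hout : 0 ≤ ∑ i, (1 - u i) := Finset.sum_nonneg fun i _ => sub_nonneg.2 (hu₁ i)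
  unfold trimmedLoss ridgeLoss
  positivity

theorem trimmedLoss_le_of_threshold {u' : ι → ℝ} (hu₀ : 0 ≤ u) (hu₁ : u ≤ 1) (v : n → ℝ)
    (hu' : ∀ i, u' i = if (r i - x i ⬝ᵥ v) ^ 2 < ε then 1 else 0) :
    trimmedLoss x r u' ζ ε v ≤ trimmedLoss x r u ζ ε v := by
  have key : ∑ i, (u' i * (r i - x i ⬝ᵥ v) ^ 2 + ε * (1 - u' i)) ≤
      ∑ i, (u i * (r i - x i ⬝ᵥ v) ^ 2 + ε * (1 - u i)) :=
    Finset.sum_le_sum fun i _ => hu' i ▸ ite_lt_mul_add_le (hu₀ i) (hu₁ i)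
  simp only [Finset.sum_add_distrib, ← Finset.mul_sum] at key
  unfold trimmedLoss ridgeLoss
  linarith

variable [DecidableEq n]

theorem dotProduct_ridgeMatrix_mulVec_self (v : n → ℝ) :
    v ⬝ᵥ ridgeMatrix x u ζ *ᵥ v = ∑ i, u i * (x i ⬝ᵥ v) ^ 2 + ζ * (v ⬝ᵥ v) := by
  simp only [ridgeMatrix, add_mulVec, sum_mulVec, smul_mulVec, vecMulVec_mulVec, one_mulVec,
    dotProduct_add, dotProduct_sum, dotProduct_smul, op_smul_eq_mul, smul_eq_mul]
  congr 1
  exact Finset.sum_congr rfl fun i _ => by rw [dotProduct_comm v, sq]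

theorem ridgeLoss_eq (v : n → ℝ) :
    ridgeLoss x r u ζ v = ∑ i, u i * r i ^ 2 - 2 * ((∑ i, u i • r i • x i) ⬝ᵥ v) +
      v ⬝ᵥ ridgeMatrix x u ζ *ᵥ v := by
  simp only [ridgeLoss, dotProduct_ridgeMatrix_mulVec_self, sum_dotProduct, smul_dotProduct,
    smul_eq_mul, Finset.mul_sum, ← Finset.sum_sub_distrib]
  rw [← add_assoc, ← Finset.sum_add_distrib]
  congr 1
  exact Finset.sum_congr rfl fun i _ => by ring

theorem ridgeMatrix_posDef (hu : 0 ≤ u) (hζ : 0 < ζ) : (ridgeMatrix x u ζ).PosDef := by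
  refine PosDef.posSemidef_add (posSemidef_sum _ fun i _ => ?_) (PosDef.one.smul hζ)
  simpa using (posSemidef_vecMulVec_self_star (x i)).smul (hu i)

theorem mul_dotProduct_self_le_dotProduct_ridgeMatrix_mulVec (hu : 0 ≤ u) (v : n → ℝ) :
    ζ * (v ⬝ᵥ v) ≤ v ⬝ᵥ ridgeMatrix x u ζ *ᵥ v := by
  have hfit : 0 ≤ ∑ i, u i * (x i ⬝ᵥ v) ^ 2 :=
    Finset.sum_nonneg fun i _ => mul_nonneg (hu i) (sq_nonneg _)
  rw [dotProduct_ridgeMatrix_mulVec_self]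
  linarith

theorem ridgeLoss_solution_add_le (hu : 0 ≤ u) (hζ : 0 < ζ) (v : n → ℝ) :
    let w := (ridgeMatrix x u ζ)⁻¹ *ᵥ ∑ i, u i • r i • x i
    ridgeLoss x r u ζ w + ζ * ((v - w) ⬝ᵥ (v - w)) ≤ ridgeLoss x r u ζ v := by
  intro w
  have hw : ridgeMatrix x u ζ *ᵥ w = ∑ i, u i • r i • x i := by
    rw [mulVec_mulVec, mul_nonsing_inv _ ((ridgeMatrix_posDef x hu hζ).isUnit.map detMonoidHom),
      one_mulVec]
  have hquad := (ridgeMatrix_isSymm x u ζ).dotProduct_mulVec_sub_eq hw v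
  rw [ridgeLoss_eq, ridgeLoss_eq]
  linarith [mul_dotProduct_self_le_dotProduct_ridgeMatrix_mulVec x (ζ := ζ) hu (v - w)]

theorem trimmedLoss_step_add_le {u' : ι → ℝ} (hu₀ : 0 ≤ u) (hu₁ : u ≤ 1) (hζ : 0 < ζ)
    {w w' : n → ℝ} (hw' : w' = (ridgeMatrix x u ζ)⁻¹ *ᵥ ∑ i, u i • r i • x i)
    (hu' : ∀ i, u' i = if (r i - x i ⬝ᵥ w') ^ 2 < ε then 1 else 0) :
    trimmedLoss x r u' ζ ε w' + ζ * ((w - w') ⬝ᵥ (w - w')) ≤ trimmedLoss x r u ζ ε w := by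
  have hridge := ridgeLoss_solution_add_le x r hu₀ hζ w
  rw [← hw'] at hridge
  have hthreshold := trimmedLoss_le_of_threshold x r (ζ := ζ) hu₀ hu₁ w' hu'
  unfold trimmedLoss at *
  linarith

end RidgeRegression

theorem stmt_10_general (d M : ℕ)
    (x : Fin M → EuclideanSpace ℝ (Fin d)) (r : Fin M → ℝ)
    (ζ ε : ℝ) (hζ : 0 < ζ) (hε : 0 < ε)
    (w : ℕ → EuclideanSpace ℝ (Fin d)) (u : ℕ → Fin M → ℝ)
    (hu : ∀ t i, u t i = if (r i - ⟪x i, w t⟫) ^ 2 < ε then 1 else 0)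
    (hw : ∀ t, w (t + 1) =
      ((∑ i, u t i • Matrix.vecMulVec (x i) (x i)) +
        ζ • (1 : Matrix (Fin d) (Fin d) ℝ))⁻¹.mulVec (∑ i, u t i • r i • x i)) :
    Filter.Tendsto (fun t : ℕ => ‖w (t + 1) - w t‖ ^ 2) Filter.atTop (nhds 0) := by
  let X i := WithLp.ofLp (x i)
  let F t := trimmedLoss X r (u t) ζ ε (WithLp.ofLp (w t))
  have hu' : ∀ t i, u t i = if (r i - X i ⬝ᵥ WithLp.ofLp (w t)) ^ 2 < ε then 1 else 0 := by
    simpa only [EuclideanSpace.inner_eq_star_dotProduct, star_trivial, dotProduct_comm] using hu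
  have hu₀ (t : ℕ) : 0 ≤ u t := fun i => by rw [hu t i]; split_ifs <;> norm_num
  have hu₁ (t : ℕ) : u t ≤ 1 := fun i => by rw [hu t i]; split_ifs <;> norm_num
  have hdesc (t : ℕ) : F (t + 1) + ζ * ‖w (t + 1) - w t‖ ^ 2 ≤ F t := by
    rw [norm_sub_rev, ← real_inner_self_eq_norm_sq, EuclideanSpace.inner_eq_star_dotProduct,
      star_trivial, WithLp.ofLp_sub]
    exact trimmedLoss_step_add_le X r (hu₀ t) (hu₁ t) hζ (hw t) (hu' (t + 1))
  have hbdd : BddBelow (Set.range F) :=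
    ⟨0, Set.forall_mem_range.2 fun t => trimmedLoss_nonneg X r (hu₀ t) (hu₁ t) hζ.le hε.le _⟩
  have hlim := tendsto_zero_of_add_le_of_bddBelow (fun t => by positivity) hbdd hdesc
  simpa [hζ.ne'] using hlim.const_mul ζ⁻¹

/-- second assertion of Lemma 2: the squared consecutive
differences of the reweighted iteration tend to 0. -/
theorem stmt_10 (d M : ℕ) (hd : 0 < d) (hM : 0 < M)
    (x : Fin M → EuclideanSpace ℝ (Fin d)) (r : Fin M → ℝ)
    (ζ ε : ℝ) (hζ : 0 < ζ) (hε : 0 < ε)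
    (w : ℕ → EuclideanSpace ℝ (Fin d)) (u : ℕ → Fin M → ℝ)
    (hu : ∀ t i, u t i = if (r i - ⟪x i, w t⟫) ^ 2 < ε then 1 else 0)
    (hw : ∀ t, w (t + 1) =
      ((∑ i, u t i • Matrix.vecMulVec (x i) (x i)) +
        ζ • (1 : Matrix (Fin d) (Fin d) ℝ))⁻¹.mulVec (∑ i, u t i • r i • x i)) :
    Filter.Tendsto (fun t : ℕ => ‖w (t + 1) - w t‖ ^ 2) Filter.atTop (nhds 0) :=
  stmt_10_general d M x r ζ ε hζ hε w u hu hw
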